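/- arXiv:2408.05615 — 5 statements merged into one kernel-verified Lean document; each statement's English description precedes it below -/
import Mathlib

section
/- Let 0<α<1 and 0<z<1, set s = √(1-(1-α²)z) and y₋ = (1-s)/((1+α)z). Then f(y₋) = (1-α)·log(1-α²) - 2·log(1+s) + 2α·log(α+s), where f(y) = (1-α)·log y + (1+α)·log(1-y) - (1-α)·log(1-zy). -/
theorem stmt_1 (α z : ℝ) (hα : 0 < α) (hα1 : α < 1) (hz : 0 < z) (hz1 : z < 1) :
    let s := Real.sqrt (1 - (1 - α ^ 2) * z)
    let ym := (1 - s) / ((1 + α) * z)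
    (1 - α) * Real.log ym + (1 + α) * Real.log (1 - ym) - (1 - α) * Real.log (1 - z * ym)
      = (1 - α) * Real.log (1 - α ^ 2) - 2 * Real.log (1 + s) + 2 * α * Real.log (α + s) := by
  intro s ym
  have harg : (0:ℝ) < 1 - (1 - α ^ 2) * z := by nlinarith
  have hs2 : s ^ 2 = 1 - (1 - α ^ 2) * z := Real.sq_sqrt harg.le
  have hs0 : 0 < s := Real.sqrt_pos.mpr harg
  have ha2 : (0:ℝ) < 1 - α ^ 2 := by nlinarith
  have hpos : (0:ℝ) < (1 - α ^ 2) * z := mul_pos ha2 hz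
  have hpos2 : (0:ℝ) < (1 - α ^ 2) * (1 - z) := mul_pos ha2 (by linarith)
  have hs1 : s < 1 := by nlinarith [sq_nonneg (s - 1)]
  have hαs : α < s := by nlinarith [sq_nonneg (s - α), sq_nonneg (s + α), hpos2]
  have h1s : (0:ℝ) < 1 + s := by linarith
  have h1α : (0:ℝ) < 1 + α := by linarith
  have h1α' : (0:ℝ) < 1 - α := by linarith
  have hαs' : (0:ℝ) < α + s := by linarith
  have hym : ym = (1 - α) / (1 + s) := by
    show (1 - s) / ((1 + α) * z) = (1 - α) / (1 + s)
    rw [div_eq_div_iff (by positivity) h1s.ne']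
    nlinarith
  have hym1 : 1 - ym = (α + s) / (1 + s) := by
    rw [hym]; field_simp; ring
  have hymz : 1 - z * ym = (α + s) / (1 + α) := by
    rw [hym]
    rw [eq_div_iff h1α.ne']
    have : z * ((1 - α) / (1 + s)) * (1 + s) = z * (1 - α) := by
      field_simp
    nlinarith [this]
  rw [hym1, hymz, hym,
    Real.log_div h1α'.ne' h1s.ne', Real.log_div hαs'.ne' h1s.ne',
    Real.log_div hαs'.ne' h1α.ne',
    show (1 : ℝ) - α ^ 2 = (1 - α) * (1 + α) by ring,
    Real.log_mul h1α'.ne' h1α.ne']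
  ring
end

section
/- Let 0<α<1 and 0<z<1, set s = √(1-(1-α²)z) and y₋ = (1-s)/((1+α)z). Then the second derivative of f(y) = (1-α)·log y + (1+α)·log(1-y) - (1-α)·log(1-zy) at y₋ equals f''(y₋) = -2·(1+α)·(1+s)²·s / ((1-α)·(α+s)²). -/
theorem stmt_3 (α z : ℝ) (hα : 0 < α) (hα1 : α < 1) (hz : 0 < z) (hz1 : z < 1) :
    let s := Real.sqrt (1 - (1 - α ^ 2) * z)
    let ym := (1 - s) / ((1 + α) * z)
    deriv (deriv (fun y : ℝ => (1 - α) * Real.log y + (1 + α) * Real.log (1 - y)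
        - (1 - α) * Real.log (1 - z * y))) ym
      = -2 * (1 + α) * (1 + s) ^ 2 * s / ((1 - α) * (α + s) ^ 2) := by
  intro s ym
  have hα0 : (0:ℝ) < 1 - α := by linarith
  have hα2 : (0:ℝ) < 1 + α := by linarith
  have hnn : 0 ≤ 1 - (1 - α ^ 2) * z := by nlinarith
  have hs2 : s ^ 2 = 1 - (1 - α ^ 2) * z := Real.sq_sqrt hnn
  have hsα : α < s := by
    have h := mul_pos (mul_pos hα0 hα2) (show (0:ℝ) < 1 - z by linarith)
    exact (Real.lt_sqrt hα.le).mpr (by nlinarith)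
  have hs0 : 0 < s := lt_trans hα hsα
  have hsq1 : s ^ 2 < 1 := by nlinarith [mul_pos (mul_pos hα0 hα2) hz]
  have hs1 : s < 1 := by nlinarith [hsq1, hs0]
  have h1s : (0:ℝ) < 1 + s := by linarith
  have hαs : (0:ℝ) < α + s := by linarith
  have hym : ym = (1 - α) / (1 + s) := by
    show (1 - s) / ((1 + α) * z) = (1 - α) / (1 + s)
    rw [div_eq_div_iff (by positivity) (by positivity)]
    nlinarith [hs2]
  have hym0 : 0 < ym := by rw [hym]; positivity
  have hym1 : ym < 1 := by
    rw [hym, div_lt_one h1s]; linarith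
  have h1ym : 1 - ym = (α + s) / (1 + s) := by
    rw [hym]; field_simp; ring
  have h1ympos : 0 < 1 - ym := by rw [h1ym]; positivity
  have hzval : z = (1 - s ^ 2) / ((1 - α) * (1 + α)) := by
    rw [eq_div_iff (by positivity)]; nlinarith [hs2]
  have h1zym : 1 - z * ym = (α + s) / (1 + α) := by
    rw [hym, hzval]
    field_simp
    ring
  have h1zympos : 0 < 1 - z * ym := by rw [h1zym]; positivity
  have hm : ym < min 1 z⁻¹ := by
    refine lt_min hym1 ?_
    rw [lt_inv_comm₀ hym0 hz]
    have : z * ym < 1 := by linarith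
    calc z = z * ym * ym⁻¹ := by field_simp
    _ < 1 * ym⁻¹ := by
        apply mul_lt_mul_of_pos_right this (by positivity)
    _ = ym⁻¹ := one_mul _
  -- first derivative on a neighborhood
  set f1 : ℝ → ℝ := fun y =>
    (1 - α) * y⁻¹ + (1 + α) * ((1 - y)⁻¹ * (-1)) - (1 - α) * ((1 - z * y)⁻¹ * (-z)) with hf1
  have hev : deriv (fun y : ℝ => (1 - α) * Real.log y + (1 + α) * Real.log (1 - y)
      - (1 - α) * Real.log (1 - z * y)) =ᶠ[nhds ym] f1 := by
    filter_upwards [isOpen_Ioo.mem_nhds (show ym ∈ Set.Ioo 0 (min 1 z⁻¹) from ⟨hym0, hm⟩)]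
      with y hy
    obtain ⟨hy0, hy1⟩ := hy
    have hy1' : y < 1 := lt_of_lt_of_le hy1 (min_le_left _ _)
    have hyz : z * y < 1 := by
      have := lt_of_lt_of_le hy1 (min_le_right _ _)
      calc z * y < z * z⁻¹ := by apply mul_lt_mul_of_pos_left this hz
      _ = 1 := by field_simp
    have t1 : HasDerivAt (fun y : ℝ => (1 - α) * Real.log y) ((1 - α) * y⁻¹) y :=
      (Real.hasDerivAt_log hy0.ne').const_mul _
    have t2i : HasDerivAt (fun y : ℝ => 1 - y) (-1) y := (hasDerivAt_id y).const_sub 1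
    have t2 : HasDerivAt (fun y : ℝ => (1 + α) * Real.log (1 - y))
        ((1 + α) * ((1 - y)⁻¹ * (-1))) y :=
      (((Real.hasDerivAt_log (by linarith : (1:ℝ) - y ≠ 0)).comp y t2i)).const_mul _
    have t3i : HasDerivAt (fun y : ℝ => 1 - z * y) (-z) y := by
      simpa using ((hasDerivAt_id y).const_mul z).const_sub 1
    have t3 : HasDerivAt (fun y : ℝ => (1 - α) * Real.log (1 - z * y))
        ((1 - α) * ((1 - z * y)⁻¹ * (-z))) y :=
      (((Real.hasDerivAt_log (by linarith : (1:ℝ) - z * y ≠ 0)).comp y t3i)).const_mul _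
    exact ((t1.add t2).sub t3).deriv
  rw [hev.deriv_eq]
  -- second derivative
  have u1 : HasDerivAt (fun y : ℝ => (1 - α) * y⁻¹) ((1 - α) * (-(ym ^ 2)⁻¹)) ym :=
    (hasDerivAt_inv hym0.ne').const_mul _
  have u2i : HasDerivAt (fun y : ℝ => 1 - y) (-1) ym := (hasDerivAt_id ym).const_sub 1
  have u2 : HasDerivAt (fun y : ℝ => (1 + α) * ((1 - y)⁻¹ * (-1)))
      ((1 + α) * ((-((1 - ym) ^ 2)⁻¹ * (-1)) * (-1))) ym :=
    ((((hasDerivAt_inv h1ympos.ne').comp ym u2i)).mul_const (-1)).const_mul _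
  have u3i : HasDerivAt (fun y : ℝ => 1 - z * y) (-z) ym := by
    simpa using ((hasDerivAt_id ym).const_mul z).const_sub 1
  have u3 : HasDerivAt (fun y : ℝ => (1 - α) * ((1 - z * y)⁻¹ * (-z)))
      ((1 - α) * ((-((1 - z * ym) ^ 2)⁻¹ * (-z)) * (-z))) ym :=
    ((((hasDerivAt_inv h1zympos.ne').comp ym u3i)).mul_const (-z)).const_mul _
  have hD : deriv f1 ym = (1 - α) * (-(ym ^ 2)⁻¹)
      + (1 + α) * ((-((1 - ym) ^ 2)⁻¹ * (-1)) * (-1))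
      - (1 - α) * ((-((1 - z * ym) ^ 2)⁻¹ * (-z)) * (-z)) :=
    ((u1.add u2).sub u3).deriv
  rw [hD, h1zym, h1ym, hym, hzval]
  have h1 : ((1:ℝ) - α) * (1 + α) ≠ 0 := by positivity
  field_simp
  ring
end

section
/- For 0<z<1 and 0<α<1, define Y = (1-√(1-z))/(2√(1-z)) and q(x) = (1-e^{-x})·((Y+1)e^{x} - Y). Then x₀ = log( (1+√(1-(1-α²)z)) / ((1-α)(1+√(1-z))) ) satisfies q(x₀) = α·q'(x₀). -/
/-!
Writing `E = exp x`, one has `q x = (Y + 1) E - (2Y + 1) + Y / E` and `q' x = (Y + 1) E - Y / E`,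
so `q x = α q' x` is the quadratic equation `(1 - α)(Y + 1) E² - (2Y + 1) E + (1 + α) Y = 0`.
With `s = √(1 - z)` and `Y = (1 - s) / (2s)` it becomes `(1 - α)(1 + s) E² - 2E + (1 + α)(1 - s) = 0`,
whose discriminant is `4 (1 - (1 - α²) z)`; `exp x₀` is its larger root.
-/

open Real

theorem hasDerivAt_one_sub_exp_neg_mul (Y x : ℝ) :
    HasDerivAt (fun x => (1 - exp (-x)) * ((Y + 1) * exp x - Y))
      ((Y + 1) * exp x - Y * exp (-x)) x := by
  have h₁ : HasDerivAt (fun x => 1 - exp (-x)) (exp (-x)) x := by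
    simpa using ((hasDerivAt_exp (-x)).comp x (hasDerivAt_neg x)).const_sub 1
  have h₂ : HasDerivAt (fun x => (Y + 1) * exp x - Y) ((Y + 1) * exp x) x :=
    ((hasDerivAt_exp x).const_mul (Y + 1)).sub_const Y
  exact (h₁.mul h₂).congr_deriv (by ring)

theorem eq_mul_of_quadratic_eq_zero {α Y E : ℝ} (hE : E ≠ 0)
    (h : (1 - α) * (Y + 1) * E ^ 2 - (2 * Y + 1) * E + (1 + α) * Y = 0) :
    (1 - E⁻¹) * ((Y + 1) * E - Y) = α * ((Y + 1) * E - Y * E⁻¹) := by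
  field_simp
  linear_combination h

theorem quadratic_eq_zero_of_sq_eq {a c t : ℝ} (ha : a ≠ 0) (ht : t ^ 2 = 1 - a * c) :
    a * ((1 + t) / a) ^ 2 - 2 * ((1 + t) / a) + c = 0 := by
  field_simp
  linear_combination ht

theorem stmt_4_general (α z : ℝ) (hα1 : α < 1) (hz : 0 < z) (hz1 : z < 1) :
    let Y := (1 - Real.sqrt (1 - z)) / (2 * Real.sqrt (1 - z))
    let q := fun x : ℝ => (1 - Real.exp (-x)) * ((Y + 1) * Real.exp x - Y)
    let x₀ := Real.log ((1 + Real.sqrt (1 - (1 - α ^ 2) * z))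
        / ((1 - α) * (1 + Real.sqrt (1 - z))))
    q x₀ = α * deriv q x₀ := by
  intro Y q x₀
  set s := √(1 - z)
  set t := √(1 - (1 - α ^ 2) * z)
  have hs : 0 < s := sqrt_pos.mpr (by linarith)
  have hs2 : s ^ 2 = 1 - z := sq_sqrt (by linarith)
  have ht2 : t ^ 2 = 1 - (1 - α ^ 2) * z := sq_sqrt (by nlinarith [sq_nonneg α])
  have ha : 0 < (1 - α) * (1 + s) := mul_pos (by linarith) (by linarith)
  have hx₀ : exp x₀ = (1 + t) / ((1 - α) * (1 + s)) :=
    exp_log (div_pos (by positivity) ha)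
  have hquad := quadratic_eq_zero_of_sq_eq (t := t) (c := (1 + α) * (1 - s)) ha.ne'
    (by linear_combination ht2 - (1 - α ^ 2) * hs2)
  rw [← hx₀] at hquad
  rw [(hasDerivAt_one_sub_exp_neg_mul Y x₀).deriv]
  show (1 - exp (-x₀)) * _ = _
  rw [exp_neg]
  refine eq_mul_of_quadratic_eq_zero (exp_pos x₀).ne' ?_
  have hY : Y = (1 - s) / (2 * s) := rfl
  rw [hY]
  field_simp
  linear_combination hquad

theorem stmt_4 (α z : ℝ) (hα : 0 < α) (hα1 : α < 1) (hz : 0 < z) (hz1 : z < 1) :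
    let Y := (1 - Real.sqrt (1 - z)) / (2 * Real.sqrt (1 - z))
    let q := fun x : ℝ => (1 - Real.exp (-x)) * ((Y + 1) * Real.exp x - Y)
    let x₀ := Real.log ((1 + Real.sqrt (1 - (1 - α ^ 2) * z))
        / ((1 - α) * (1 + Real.sqrt (1 - z))))
    q x₀ = α * deriv q x₀ :=
  stmt_4_general α z hα1 hz hz1
end

section
/- For 0<z<1 and 0<α<1, with Y=(1-√(1-z))/(2√(1-z)), q(x)=(1-e^{-x})·((Y+1)e^{x}-Y), and x₀ = log((1+√(1-(1-α²)z))/((1-α)(1+√(1-z)))), one has q(x₀) - α²·q''(x₀) = α·√(1-(1-α²)z) / √(1-z). -/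
/-! With `s = √(1-z)` and `t = √(1-(1-α²)z)`, one has `Y + 1 = (1+s)/(2s)`, `Y = (1-s)/(2s)`, and
`q x = (Y+1)eˣ + Ye⁻ˣ - (2Y+1)`, so `q'' x = (Y+1)eˣ + Ye⁻ˣ`. At `x₀` we have
`e^{x₀} = (1+t)/((1-α)(1+s))`, and the single relation `t² = α² + (1-α²)s²` (equivalently
`(1-α²)z = (1-t)(1+t)`) collapses `q x₀ - α² q'' x₀` to `αt/s`. -/

open Real

lemma one_sub_exp_neg_mul (A B x : ℝ) :
    (1 - exp (-x)) * (A * exp x - B) = A * exp x + B * exp (-x) + -(A + B) := by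
  have h : exp (-x) * exp x = 1 := by rw [← exp_add]; simp
  linear_combination (-A) * h

lemma hasDerivAt_exp_add_exp_neg (a b c x : ℝ) :
    HasDerivAt (fun x => a * exp x + b * exp (-x) + c) (a * exp x + -b * exp (-x)) x := by
  have h := (((hasDerivAt_exp x).const_mul a).add
    (((hasDerivAt_exp (-x)).comp x (hasDerivAt_neg x)).const_mul b)).add_const c
  exact h.congr_deriv (by ring)

-- The `+ 0` keeps the result in the shape of the left-hand side, so the lemma can be iterated.
lemma deriv_exp_add_exp_neg (a b c : ℝ) :
    deriv (fun x => a * exp x + b * exp (-x) + c) = fun x => a * exp x + -b * exp (-x) + 0 := by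
  funext x
  rw [(hasDerivAt_exp_add_exp_neg a b c x).deriv, add_zero]

lemma deriv_deriv_exp_add_exp_neg (a b c : ℝ) :
    deriv (deriv (fun x => a * exp x + b * exp (-x) + c)) = fun x => a * exp x + b * exp (-x) := by
  rw [deriv_exp_add_exp_neg, deriv_exp_add_exp_neg, neg_neg]
  simp only [add_zero]

lemma exp_combination_identity {α s t : ℝ} (hα : α ≠ 1) (hs : 0 < s) (ht : 0 < t)
    (hst : t ^ 2 = α ^ 2 + (1 - α ^ 2) * s ^ 2) :
    let Y := (1 - s) / (2 * s)
    let E := (1 + t) / ((1 - α) * (1 + s))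
    (1 - α ^ 2) * ((Y + 1) * E + Y * E⁻¹) - (2 * Y + 1) = α * t / s := by
  intro Y E
  have h1α : 1 - α ≠ 0 := sub_ne_zero.2 hα.symm
  simp only [Y, E]
  field_simp
  linear_combination ((1 - α ^ 2) * (1 + s) - 2 * α * (1 - α) * (1 + s)) * hst

theorem stmt_5_general (α z : ℝ) (hα1 : α < 1) (hz : 0 < z) (hz1 : z < 1) :
    let Y := (1 - Real.sqrt (1 - z)) / (2 * Real.sqrt (1 - z))
    let q := fun x : ℝ => (1 - Real.exp (-x)) * ((Y + 1) * Real.exp x - Y)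
    let x₀ := Real.log ((1 + Real.sqrt (1 - (1 - α ^ 2) * z))
        / ((1 - α) * (1 + Real.sqrt (1 - z))))
    q x₀ - α ^ 2 * deriv (deriv q) x₀
      = α * Real.sqrt (1 - (1 - α ^ 2) * z) / Real.sqrt (1 - z) := by
  intro Y q x₀
  set s := √(1 - z)
  set t := √(1 - (1 - α ^ 2) * z)
  have hs : 0 < s := sqrt_pos.2 (by linarith)
  have hT : 0 < 1 - (1 - α ^ 2) * z := by nlinarith
  have ht : 0 < t := sqrt_pos.2 hT
  have hst : t ^ 2 = α ^ 2 + (1 - α ^ 2) * s ^ 2 := by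
    rw [sq_sqrt hT.le, sq_sqrt (by linarith)]; ring
  have hq : q = fun x => (Y + 1) * exp x + Y * exp (-x) + -(Y + 1 + Y) :=
    funext fun x => one_sub_exp_neg_mul _ _ x
  have hx₀ : exp x₀ = (1 + t) / ((1 - α) * (1 + s)) :=
    exp_log (div_pos (by linarith) (mul_pos (by linarith) (by linarith)))
  rw [← exp_combination_identity hα1.ne hs ht hst, hq, deriv_deriv_exp_add_exp_neg]
  simp only [exp_neg, hx₀]
  ring

theorem stmt_5 (α z : ℝ) (hα : 0 < α) (hα1 : α < 1) (hz : 0 < z) (hz1 : z < 1) :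
    let Y := (1 - Real.sqrt (1 - z)) / (2 * Real.sqrt (1 - z))
    let q := fun x : ℝ => (1 - Real.exp (-x)) * ((Y + 1) * Real.exp x - Y)
    let x₀ := Real.log ((1 + Real.sqrt (1 - (1 - α ^ 2) * z))
        / ((1 - α) * (1 + Real.sqrt (1 - z))))
    q x₀ - α ^ 2 * deriv (deriv q) x₀
      = α * Real.sqrt (1 - (1 - α ^ 2) * z) / Real.sqrt (1 - z) :=
  stmt_5_general α z hα1 hz hz1
end

section
/- Suppose f : [0,∞) → ℂ is continuously differentiable, w, λ ∈ ℂ with Re(w) > 0, Re(λ) > 0, α ∈ ℂ, and all integrals below converge absolutely. Then ∫₀^∞ e^{-w t} t^{λ-1} f(t) dt = f(α)·Γ(λ)/w^{λ} + (1/w)·∫₀^∞ e^{-w t} t^{λ-1} · f̃₁(t) dt, where f̃₁(t) = t·d/dt[ (f(t)-f(α))/(t-α) ], provided f̃₁ extends continuously across t = α, the boundary terms e^{-wt}t^{λ}(f(t)-f(α))/(t-α) vanish at t=0 and t=∞, and λ = α·w. -/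
/-!
With `λ = α w` the weight `e^{-wt} t^λ` has derivative `-w e^{-wt} t^{λ-1} (t - α)`, whose factor
`t - α` cancels the denominator of the slope `(f t - f α) / (t - α)`. Hence the boundary term
`e^{-wt} t^λ (f t - f α) / (t - α)` has derivative `e^{-wt} t^{λ-1} (f̃₁ t - w (f t - f α))`, and
integrating it over `(0, ∞)` gives `0`: its singularity at `α` is removable, with limit
`e^{-wα} α^λ f'(α)` from both sides. What remains is `∫₀^∞ e^{-wt} t^{λ-1} dt = Γ(λ)/w^λ`, which
for complex `w` follows from the real case by analytic continuation in `w` across the right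
half-plane.
-/

open MeasureTheory
open Set Filter Topology Complex

section GammaIntegral

variable {s w : ℂ}

lemma norm_cexp_neg_mul_mul_cpow {t : ℝ} (ht : 0 < t) :
    ‖cexp (-w * t) * (t : ℂ) ^ (s - 1)‖ = t ^ (s.re - 1) * Real.exp (-w.re * t) := by
  rw [norm_mul, norm_exp, norm_cpow_eq_rpow_re_of_pos ht, mul_comm]
  simp

lemma continuousOn_cexp_neg_mul_mul_cpow :
    ContinuousOn (fun t : ℝ => cexp (-w * t) * (t : ℂ) ^ (s - 1)) (Ioi 0) := fun t ht =>
  ((by fun_prop : Continuous fun t : ℝ => cexp (-w * t)).continuousAt.mul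
    (continuousAt_ofReal_cpow_const _ _ (Or.inr (ne_of_gt ht)))).continuousWithinAt

lemma integrableOn_cexp_neg_mul_mul_cpow (hs : 0 < s.re) (hw : 0 < w.re) :
    IntegrableOn (fun t : ℝ => cexp (-w * t) * (t : ℂ) ^ (s - 1)) (Ioi 0) := by
  have hbound := integrableOn_rpow_mul_exp_neg_mul_rpow (p := 1) (s := s.re - 1)
    (by linarith) one_pos hw
  simp only [Real.rpow_one] at hbound
  refine hbound.mono' (continuousOn_cexp_neg_mul_mul_cpow.aestronglyMeasurable
    measurableSet_Ioi) ?_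
  filter_upwards [ae_restrict_mem measurableSet_Ioi] with t ht
  rw [norm_cexp_neg_mul_mul_cpow ht]

lemma differentiableOn_integral_cexp_neg_mul_mul_cpow (hs : 0 < s.re) :
    DifferentiableOn ℂ (fun z : ℂ => ∫ t in Ioi (0 : ℝ), cexp (-z * t) * (t : ℂ) ^ (s - 1))
      {z | 0 < z.re} := by
  intro z (hz : 0 < z.re)
  have hr : 0 < z.re / 2 := half_pos hz
  have h_bound : ∀ᵐ t : ℝ ∂volume.restrict (Ioi 0), ∀ x ∈ Metric.ball z (z.re / 2),
      ‖-(t : ℂ) * (cexp (-x * t) * (t : ℂ) ^ (s - 1))‖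
        ≤ ‖cexp (-((z.re / 2 : ℝ) : ℂ) * t) * (t : ℂ) ^ (s + 1 - 1)‖ := by
    filter_upwards [ae_restrict_mem measurableSet_Ioi] with t (ht : 0 < t) x hx
    have hx : z.re / 2 ≤ x.re := by
      have := (abs_re_le_norm (x - z)).trans (mem_ball_iff_norm.mp hx).le
      rw [sub_re, abs_le] at this
      linarith
    rw [norm_mul, norm_cexp_neg_mul_mul_cpow ht, norm_cexp_neg_mul_mul_cpow ht, norm_neg,
      norm_real, Real.norm_of_nonneg ht.le, add_re, one_re, add_sub_cancel_right,
      Real.rpow_sub_one ht.ne', ofReal_re, ← mul_assoc, mul_div_cancel₀ _ ht.ne']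
    gcongr
  have h_diff : ∀ᵐ t : ℝ ∂volume.restrict (Ioi 0), ∀ x ∈ Metric.ball z (z.re / 2),
      HasDerivAt (fun x : ℂ => cexp (-x * t) * (t : ℂ) ^ (s - 1))
        (-(t : ℂ) * (cexp (-x * t) * (t : ℂ) ^ (s - 1))) x := .of_forall fun t x _ => by
    refine ((((hasDerivAt_neg x).mul_const (t : ℂ)).cexp).mul_const _).congr_deriv ?_
    ring
  exact (hasDerivAt_integral_of_dominated_loc_of_deriv_le
    (F := fun (x : ℂ) (t : ℝ) => cexp (-x * t) * (t : ℂ) ^ (s - 1)) (Metric.ball_mem_nhds z hr)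
    (.of_forall fun x => continuousOn_cexp_neg_mul_mul_cpow.aestronglyMeasurable
      measurableSet_Ioi)
    (integrableOn_cexp_neg_mul_mul_cpow hs hz)
    ((continuous_ofReal.neg.continuousOn.mul
      continuousOn_cexp_neg_mul_mul_cpow).aestronglyMeasurable measurableSet_Ioi)
    h_bound (integrableOn_cexp_neg_mul_mul_cpow (by rw [add_re, one_re]; linarith)
      (by rwa [ofReal_re])).norm
    h_diff).2.differentiableAt.differentiableWithinAt

lemma integral_cexp_neg_ofReal_mul_mul_cpow (hs : 0 < s.re) {r : ℝ} (hr : 0 < r) :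
    ∫ t in Ioi (0 : ℝ), cexp (-r * t) * (t : ℂ) ^ (s - 1) = Gamma s / (r : ℂ) ^ s := by
  have harg : (r : ℂ).arg ≠ Real.pi := by
    rw [arg_ofReal_of_nonneg hr.le]; exact Real.pi_ne_zero.symm
  rw [div_eq_inv_mul, ← inv_cpow _ _ harg, ← one_div, ← integral_cpow_mul_exp_neg_mul_Ioi hs hr]
  exact setIntegral_congr_fun measurableSet_Ioi fun t _ => by ring_nf

theorem integral_cexp_neg_mul_mul_cpow (hs : 0 < s.re) (hw : 0 < w.re) :
    ∫ t in Ioi (0 : ℝ), cexp (-w * t) * (t : ℂ) ^ (s - 1) = Gamma s / w ^ s := by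
  have hU : IsOpen {z : ℂ | 0 < z.re} := isOpen_lt continuous_const continuous_re
  have hGamma : DifferentiableOn ℂ (fun z : ℂ => Gamma s / z ^ s) {z | 0 < z.re} :=
    fun z (hz : 0 < z.re) => ((differentiableAt_const _).div
      (differentiableAt_id.cpow_const (Or.inl hz))
      (by rw [Ne, cpow_eq_zero_iff]; rintro ⟨rfl, -⟩; simp at hz)).differentiableWithinAt
  have hreal : ∃ᶠ z in 𝓝[≠] (1 : ℂ),
      ∫ t in Ioi (0 : ℝ), cexp (-z * t) * (t : ℂ) ^ (s - 1) = Gamma s / z ^ s := by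
    have hmap : Tendsto ((↑) : ℝ → ℂ) (𝓝[≠] 1) (𝓝[≠] 1) :=
      tendsto_nhdsWithin_iff.2 ⟨(continuous_ofReal.tendsto' 1 1 ofReal_one).mono_left
        nhdsWithin_le_nhds, eventually_nhdsWithin_of_forall fun r hr h => hr (ofReal_eq_one.mp h)⟩
    refine hmap.frequently (Eventually.frequently ?_)
    filter_upwards [nhdsWithin_le_nhds (lt_mem_nhds one_pos)] with r hr
    exact integral_cexp_neg_ofReal_mul_mul_cpow hs hr
  exact ((differentiableOn_integral_cexp_neg_mul_mul_cpow hs).analyticOnNhd hU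
    ).eqOn_of_preconnected_of_frequently_eq (hGamma.analyticOnNhd hU)
    (convex_halfSpace_re_gt 0).isPreconnected (by simp) hreal hw

end GammaIntegral

theorem integral_Ioi_of_hasDerivAt_off_of_tendsto {E : Type*} [NormedAddCommGroup E]
    [NormedSpace ℝ E] [CompleteSpace E] {G g : ℝ → E} {a b : ℝ} {A L B : E} (hab : a < b)
    (hderiv : ∀ t, a < t → t ≠ b → HasDerivAt G (g t) t) (hg : IntegrableOn g (Ioi a))
    (ha : Tendsto G (𝓝[>] a) (𝓝 A)) (hb : Tendsto G (𝓝[≠] b) (𝓝 L))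
    (htop : Tendsto G atTop (𝓝 B)) :
    ∫ t in Ioi a, g t = B - A := by
  have hleft : ∫ t in a..b, g t = L - A :=
    intervalIntegral.integral_eq_sub_of_hasDerivAt_of_tendsto hab
      (fun t ht => hderiv t ht.1 ht.2.ne)
      ((intervalIntegrable_iff_integrableOn_Ioc_of_le hab.le).2 (hg.mono_set Ioc_subset_Ioi_self))
      ha (hb.mono_left (nhdsWithin_mono _ fun t ht => ne_of_lt ht))
  have hright : ∫ t in Ioi b, g t = B - L := by
    have hG := Function.update_eventuallyEq G b L
    simpa using integral_Ioi_of_hasDerivAt_of_tendsto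
      (continuousAt_update_same.2 hb).continuousWithinAt
      (fun t (ht : b < t) => (hderiv t (hab.trans ht) ht.ne').congr_of_eventuallyEq
        (hG.filter_mono (le_principal_iff.2 (isOpen_compl_singleton.mem_nhds ht.ne'))))
      (hg.mono_set (Ioi_subset_Ioi hab.le))
      (htop.congr' ((Function.update_eventuallyEq_cofinite G b L).symm.filter_mono
        atTop_le_cofinite))
  rw [← Ioc_union_Ioi_eq_Ioi hab.le, setIntegral_union (Ioc_disjoint_Ioi le_rfl)
    measurableSet_Ioi (hg.mono_set Ioc_subset_Ioi_self) (hg.mono_set (Ioi_subset_Ioi hab.le)),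
    ← intervalIntegral.integral_of_le hab.le, hleft, hright]
  abel

lemma div_ofReal_sub_eq_slope (f : ℝ → ℂ) (a t : ℝ) :
    (f t - f a) / ((t : ℂ) - a) = slope f a t := by
  rw [slope_def_module, real_smul, ofReal_inv, ofReal_sub, div_eq_inv_mul]

lemma differentiableAt_slope {E : Type*} [NormedAddCommGroup E] [NormedSpace ℝ E] {f : ℝ → E}
    {a t : ℝ} (hf : DifferentiableAt ℝ f t) (ht : t ≠ a) : DifferentiableAt ℝ (slope f a) t :=
  ((differentiableAt_id.sub_const a).inv (sub_ne_zero.2 ht)).smul (hf.sub_const _)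

lemma hasDerivAt_cexp_neg_mul_mul_cpow (w lam : ℂ) {t : ℝ} (ht : 0 < t) :
    HasDerivAt (fun t : ℝ => cexp (-w * t) * (t : ℂ) ^ lam)
      (cexp (-w * t) * (t : ℂ) ^ (lam - 1) * (lam - w * t)) t := by
  have hexp := (((hasDerivAt_id (t : ℂ)).const_mul (-w)).cexp).comp_ofReal
  have hpow := ((hasDerivAt_id (t : ℂ)).cpow_const (c := lam) (by simpa using ht)).comp_ofReal
  refine (hexp.mul hpow).congr_deriv ?_
  have ht' : (t : ℂ) ≠ 0 := ofReal_ne_zero.2 ht.ne'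
  simp only [id, cpow_sub _ _ ht', cpow_one]
  field_simp
  ring

lemma hasDerivAt_cexp_neg_mul_mul_cpow_mul_slope {f : ℝ → ℂ} {w : ℂ} {α t : ℝ} (ht : 0 < t)
    (htα : t ≠ α) (hf : DifferentiableAt ℝ f t) :
    HasDerivAt (fun t : ℝ => cexp (-w * t) * (t : ℂ) ^ (α * w) * slope f α t)
      (cexp (-w * t) * (t : ℂ) ^ (α * w - 1) * (t * deriv (slope f α) t - w * (f t - f α))) t := by
  refine ((hasDerivAt_cexp_neg_mul_mul_cpow w _ ht).mul
    (differentiableAt_slope hf htα).hasDerivAt).congr_deriv ?_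
  have hslope : ((t : ℂ) - α) * slope f α t = f t - f α := by
    rw [← ofReal_sub, ← real_smul, sub_smul_slope, vsub_eq_sub]
  have ht' : (t : ℂ) ≠ 0 := ofReal_ne_zero.2 ht.ne'
  rw [← hslope, cpow_sub _ _ ht', cpow_one]
  field_simp
  ring

lemma tendsto_cexp_neg_mul_mul_cpow_mul_slope {f : ℝ → ℂ} {f' w lam : ℂ} {α : ℝ} (hα : α ≠ 0)
    (hf : HasDerivAt f f' α) :
    Tendsto (fun t : ℝ => cexp (-w * t) * (t : ℂ) ^ lam * slope f α t) (𝓝[≠] α)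
      (𝓝 (cexp (-w * α) * (α : ℂ) ^ lam * f')) :=
  ((((by fun_prop : Continuous fun t : ℝ => cexp (-w * t)).continuousAt.mul
    (continuousAt_ofReal_cpow_const _ _ (Or.inr hα))).tendsto).mono_left nhdsWithin_le_nhds).mul
    (hasDerivAt_iff_tendsto_slope.1 hf)

theorem stmt_17_general (f f₁ : ℝ → ℂ) (w lam : ℂ) (α : ℝ)
    (hw : 0 < w.re) (hlam : 0 < lam.re) (hα : 0 < α)
    (hlamαw : lam = (α : ℂ) * w)
    (hf : ContDiffOn ℝ 1 f (Set.Ici 0))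
    (hf₁ : ∀ t : ℝ, 0 ≤ t → t ≠ α →
      f₁ t = t * deriv (fun s : ℝ => (f s - f α) / ((s : ℂ) - (α : ℂ))) t)
    (hint : IntegrableOn
      (fun t : ℝ => Complex.exp (-w * t) * (t : ℂ) ^ (lam - 1) * f t) (Set.Ioi 0))
    (hint₁ : IntegrableOn
      (fun t : ℝ => Complex.exp (-w * t) * (t : ℂ) ^ (lam - 1) * f₁ t) (Set.Ioi 0))
    (hbd0 : Filter.Tendsto
      (fun t : ℝ => Complex.exp (-w * t) * (t : ℂ) ^ lam
        * ((f t - f α) / ((t : ℂ) - (α : ℂ))))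
      (nhdsWithin 0 (Set.Ioi 0)) (nhds 0))
    (hbdTop : Filter.Tendsto
      (fun t : ℝ => Complex.exp (-w * t) * (t : ℂ) ^ lam
        * ((f t - f α) / ((t : ℂ) - (α : ℂ))))
      Filter.atTop (nhds 0)) :
    ∫ t in Set.Ioi (0 : ℝ), Complex.exp (-w * t) * (t : ℂ) ^ (lam - 1) * f t
      = f α * Complex.Gamma lam / w ^ lam
        + (1 / w) * ∫ t in Set.Ioi (0 : ℝ),
            Complex.exp (-w * t) * (t : ℂ) ^ (lam - 1) * f₁ t := by
  subst hlamαw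
  simp only [div_ofReal_sub_eq_slope] at hf₁ hbd0 hbdTop
  have hdiff : ∀ t, 0 < t → DifferentiableAt ℝ f t := fun t ht =>
    (hf.differentiableOn one_ne_zero t ht.le).differentiableAt (Ici_mem_nhds ht)
  have hweight := integrableOn_cexp_neg_mul_mul_cpow hlam hw
  have hint' : IntegrableOn (fun t : ℝ => cexp (-w * t) * (t : ℂ) ^ (α * w - 1) * f t
      - f α * (cexp (-w * t) * (t : ℂ) ^ (α * w - 1))) (Ioi 0) :=
    hint.sub (hweight.const_mul (f α))
  have hibp : ∫ t in Ioi (0 : ℝ), (cexp (-w * t) * (t : ℂ) ^ (α * w - 1) * f₁ t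
      - w * (cexp (-w * t) * (t : ℂ) ^ (α * w - 1) * f t
        - f α * (cexp (-w * t) * (t : ℂ) ^ (α * w - 1)))) = 0 - 0 :=
    integral_Ioi_of_hasDerivAt_off_of_tendsto hα
      (fun t ht htα => (hasDerivAt_cexp_neg_mul_mul_cpow_mul_slope ht htα
        (hdiff t ht)).congr_deriv (by rw [hf₁ t ht.le htα]; ring))
      (hint₁.sub (hint'.const_mul w)) hbd0
      (tendsto_cexp_neg_mul_mul_cpow_mul_slope hα.ne' (hdiff α hα).hasDerivAt) hbdTop
  rw [integral_sub hint₁ (hint'.const_mul w), integral_const_mul,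
    integral_sub hint (hweight.const_mul _), integral_const_mul,
    integral_cexp_neg_mul_mul_cpow hlam hw] at hibp
  rw [sub_eq_zero.1 (hibp.trans (sub_self 0))]
  have hw0 : w ≠ 0 := by rintro rfl; simp at hw
  field_simp
  ring

theorem stmt_17 (f f₁ : ℝ → ℂ) (w lam : ℂ) (α : ℝ)
    (hw : 0 < w.re) (hlam : 0 < lam.re) (hα : 0 < α)
    (hlamαw : lam = (α : ℂ) * w)
    (hf : ContDiffOn ℝ 1 f (Set.Ici 0))
    (hf₁cont : ContinuousOn f₁ (Set.Ici 0))
    (hf₁ : ∀ t : ℝ, 0 ≤ t → t ≠ α →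
      f₁ t = t * deriv (fun s : ℝ => (f s - f α) / ((s : ℂ) - (α : ℂ))) t)
    (hint : IntegrableOn
      (fun t : ℝ => Complex.exp (-w * t) * (t : ℂ) ^ (lam - 1) * f t) (Set.Ioi 0))
    (hint₁ : IntegrableOn
      (fun t : ℝ => Complex.exp (-w * t) * (t : ℂ) ^ (lam - 1) * f₁ t) (Set.Ioi 0))
    (hbd0 : Filter.Tendsto
      (fun t : ℝ => Complex.exp (-w * t) * (t : ℂ) ^ lam
        * ((f t - f α) / ((t : ℂ) - (α : ℂ))))
      (nhdsWithin 0 (Set.Ioi 0)) (nhds 0))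
    (hbdTop : Filter.Tendsto
      (fun t : ℝ => Complex.exp (-w * t) * (t : ℂ) ^ lam
        * ((f t - f α) / ((t : ℂ) - (α : ℂ))))
      Filter.atTop (nhds 0)) :
    ∫ t in Set.Ioi (0 : ℝ), Complex.exp (-w * t) * (t : ℂ) ^ (lam - 1) * f t
      = f α * Complex.Gamma lam / w ^ lam
        + (1 / w) * ∫ t in Set.Ioi (0 : ℝ),
            Complex.exp (-w * t) * (t : ℂ) ^ (lam - 1) * f₁ t :=
  stmt_17_general f f₁ w lam α hw hlam hα hlamαw hf hf₁ hint hint₁ hbd0 hbdTop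
end
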